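/- In the finite-dimensional design setup, fix V : Matrix (Fin m) (Fin p) ℝ. Then the matrix-valued function T(τ) := (O + τ • V)ᵀ * Σ(O + τ • V)⁻¹ * (O + τ • V) is differentiable at τ = 0 with derivative Vᵀ Σ(O)⁻¹ O − Oᵀ Σ(O)⁻¹ V Γ' Oᵀ Σ(O)⁻¹ O − Oᵀ Σ(O)⁻¹ O Γ' Vᵀ Σ(O)⁻¹ O + Oᵀ Σ(O)⁻¹ V. -/

import Mathlib

open Matrix Filter Topology

attribute [local instance] Matrix.normedAddCommGroup Matrix.normedSpace

/-- Noise covariance `Σ(X) = X Γ' Xᵀ + σ² I` of the design `X`. -/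
noncomputable def SigM {m p : ℕ} (Γ' : Matrix (Fin p) (Fin p) ℝ) (σ : ℝ)
    (X : Matrix (Fin m) (Fin p) ℝ) : Matrix (Fin m) (Fin m) ℝ :=
  X * Γ' * Xᵀ + σ ^ 2 • 1

noncomputable def mulCLM (a b c : ℕ) :
    Matrix (Fin a) (Fin b) ℝ →L[ℝ] Matrix (Fin b) (Fin c) ℝ →L[ℝ] Matrix (Fin a) (Fin c) ℝ :=
  LinearMap.toContinuousLinearMap
    { toFun := fun A => LinearMap.toContinuousLinearMap
        { toFun := fun B => A * B
          map_add' := fun B C => Matrix.mul_add _ _ _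
          map_smul' := fun r B => Matrix.mul_smul _ _ _ }
      map_add' := fun A B => by
        ext C : 1
        simp [Matrix.add_mul]
      map_smul' := fun r A => by
        ext C : 1
        simp [Matrix.smul_mul] }

@[simp] lemma mulCLM_apply {a b c : ℕ} (A : Matrix (Fin a) (Fin b) ℝ)
    (B : Matrix (Fin b) (Fin c) ℝ) : mulCLM a b c A B = A * B := by
  simp [mulCLM]

lemma HasDerivAt.matMul {a b c : ℕ} {f : ℝ → Matrix (Fin a) (Fin b) ℝ}
    {g : ℝ → Matrix (Fin b) (Fin c) ℝ} {f' : Matrix (Fin a) (Fin b) ℝ}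
    {g' : Matrix (Fin b) (Fin c) ℝ} {t : ℝ}
    (hf : HasDerivAt f f' t) (hg : HasDerivAt g g' t) :
    HasDerivAt (fun τ => f τ * g τ) (f' * g t + f t * g') t := by
  have h := (mulCLM a b c).hasFDerivAt_of_bilinear hf.hasFDerivAt hg.hasFDerivAt
  have h2 := h.hasDerivAt
  exact h2.congr_deriv (by
    change mulCLM a b c (f t) ((1:ℝ) • g') + mulCLM a b c ((1:ℝ) • f') (g t) = _
    simp [add_comm])

lemma Filter.Tendsto.matMul {α : Type*} {l : Filter α} {a b c : ℕ}
    {f : α → Matrix (Fin a) (Fin b) ℝ} {g : α → Matrix (Fin b) (Fin c) ℝ}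
    {F : Matrix (Fin a) (Fin b) ℝ} {G : Matrix (Fin b) (Fin c) ℝ}
    (hf : Tendsto f l (𝓝 F)) (hg : Tendsto g l (𝓝 G)) :
    Tendsto (fun x => f x * g x) l (𝓝 (F * G)) := by
  have hc : Continuous fun p : Matrix (Fin a) (Fin b) ℝ × Matrix (Fin b) (Fin c) ℝ =>
      mulCLM a b c p.1 p.2 := (mulCLM a b c).isBoundedBilinearMap.continuous
  have := (hc.tendsto (F, G)).comp (hf.prodMk_nhds hg)
  simpa [Function.comp_def] using this

lemma hasDerivAt_matrix_inv {m : ℕ} {S : ℝ → Matrix (Fin m) (Fin m) ℝ}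
    {S' : Matrix (Fin m) (Fin m) ℝ} {t : ℝ}
    (hS : HasDerivAt S S' t) (hU : IsUnit (S t).det) :
    HasDerivAt (fun τ => (S τ)⁻¹) (-((S t)⁻¹ * S' * (S t)⁻¹)) t := by
  have hcont : ContinuousAt S t := hS.continuousAt
  have hdet : ContinuousAt (fun τ => (S τ).det) t :=
    ((Continuous.matrix_det continuous_id).continuousAt).comp hcont
  have hne : (S t).det ≠ 0 := by
    simpa [isUnit_iff_ne_zero] using hU
  have hinv : ContinuousAt (fun τ => (S τ)⁻¹) t := by
    refine (continuousAt_matrix_inv (S t) ?_).comp hcont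
    rw [Ring.inverse_eq_inv']
    exact continuousAt_inv₀ hne
  have hev : ∀ᶠ τ in 𝓝 t, IsUnit (S τ).det := by
    filter_upwards [hdet.eventually_ne hne] with τ hτ using isUnit_iff_ne_zero.2 hτ
  refine hasDerivAt_iff_tendsto_slope.2 ?_
  have hslopeS : Tendsto (slope S t) (𝓝[≠] t) (𝓝 S') :=
    hasDerivAt_iff_tendsto_slope.1 hS
  have key : Tendsto (fun τ => (S τ)⁻¹ * (-(slope S t τ)) * (S t)⁻¹) (𝓝[≠] t)
      (𝓝 ((S t)⁻¹ * (-S') * (S t)⁻¹)) := by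
    exact ((hinv.continuousWithinAt.tendsto.matMul hslopeS.neg).matMul tendsto_const_nhds)
  have : (S t)⁻¹ * (-S') * (S t)⁻¹ = -((S t)⁻¹ * S' * (S t)⁻¹) := by
    simp [Matrix.mul_neg, Matrix.neg_mul]
  rw [this] at key
  refine key.congr' ?_
  have hev' : ∀ᶠ τ in 𝓝[≠] t, IsUnit (S τ).det := nhdsWithin_le_nhds hev
  filter_upwards [hev', self_mem_nhdsWithin] with τ hτ (hτt : τ ≠ t)
  have h1 : (S τ)⁻¹ * S τ = 1 := Matrix.nonsing_inv_mul _ hτ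
  have h2 : S t * (S t)⁻¹ = 1 := Matrix.mul_nonsing_inv _ hU
  have hdiff : (S τ)⁻¹ - (S t)⁻¹ = (S τ)⁻¹ * (S t - S τ) * (S t)⁻¹ := by
    rw [Matrix.mul_sub, Matrix.sub_mul, Matrix.mul_assoc, h2, Matrix.mul_one, h1,
      Matrix.one_mul]
  rw [slope_def_module, slope_def_module, hdiff,
    ← smul_neg, neg_sub, Matrix.mul_smul, Matrix.smul_mul]

/-- First variation of `T(O) = Oᵀ Σ(O)⁻¹ O`: the map
`τ ↦ (O + τ V)ᵀ Σ(O + τ V)⁻¹ (O + τ V)` has the indicated derivative at `τ = 0`. -/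
theorem first_variation_T
    (n p m : ℕ) (hn : 0 < n) (hp : 0 < p) (hm : 0 < m)
    (Γ' : Matrix (Fin p) (Fin p) ℝ) (hΓ' : Γ'.PosSemidef)
    (σ : ℝ) (hσ : 0 < σ)
    (O V : Matrix (Fin m) (Fin p) ℝ) :
    HasDerivAt
      (fun τ : ℝ => (O + τ • V)ᵀ * (SigM Γ' σ (O + τ • V))⁻¹ * (O + τ • V))
      (Vᵀ * (SigM Γ' σ O)⁻¹ * O
        - Oᵀ * (SigM Γ' σ O)⁻¹ * V * Γ' * Oᵀ * (SigM Γ' σ O)⁻¹ * O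
        - Oᵀ * (SigM Γ' σ O)⁻¹ * O * Γ' * Vᵀ * (SigM Γ' σ O)⁻¹ * O
        + Oᵀ * (SigM Γ' σ O)⁻¹ * V) 0 := by
  set Sg := SigM Γ' σ O with hSg
  -- derivative of A τ = O + τ • V
  have hA : HasDerivAt (fun τ : ℝ => O + τ • V) V 0 := by
    exact (((hasDerivAt_id (0:ℝ)).smul_const V).const_add O).congr_deriv (one_smul _ _)
  have hAT : HasDerivAt (fun τ : ℝ => (O + τ • V)ᵀ) Vᵀ 0 := by
    have : HasDerivAt (fun τ : ℝ => Oᵀ + τ • Vᵀ) Vᵀ 0 := by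
      exact (((hasDerivAt_id (0:ℝ)).smul_const Vᵀ).const_add Oᵀ).congr_deriv (one_smul _ _)
    refine this.congr_deriv ?_ |>.congr_of_eventuallyEq ?_
    · rfl
    · filter_upwards with τ
      simp [Matrix.transpose_add, Matrix.transpose_smul]
  -- derivative of S τ = SigM Γ' σ (O + τ • V)
  have hS : HasDerivAt (fun τ : ℝ => SigM Γ' σ (O + τ • V))
      (V * Γ' * Oᵀ + O * Γ' * Vᵀ) 0 := by
    have h1 : HasDerivAt (fun τ : ℝ => (O + τ • V) * Γ') (V * Γ') 0 := by
      have := hA.matMul (hasDerivAt_const (0:ℝ) Γ')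
      simpa using this
    have h2 := h1.matMul hAT
    have h3 := h2.add_const ((σ ^ 2) • (1 : Matrix (Fin m) (Fin m) ℝ))
    have heq : (fun τ : ℝ => (O + τ • V) * Γ' * (O + τ • V)ᵀ + σ ^ 2 • 1)
        = fun τ : ℝ => SigM Γ' σ (O + τ • V) := by
      funext τ; simp [SigM]
    rw [heq] at h3
    refine h3.congr_deriv ?_
    simp
  -- S 0 is positive definite, hence has unit determinant
  have hPD : Sg.PosDef := by
    have h1 : (O * Γ' * Oᵀ).PosSemidef := by
      have := hΓ'.mul_mul_conjTranspose_same O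
      simpa [Matrix.conjTranspose_eq_transpose_of_trivial] using this
    have h2 : ((σ ^ 2) • (1 : Matrix (Fin m) (Fin m) ℝ)).PosDef := by
      have : ((σ ^ 2) • (1 : Matrix (Fin m) (Fin m) ℝ))
          = Matrix.diagonal (fun _ => σ ^ 2) := by
        rw [Matrix.smul_eq_diagonal_mul]
        simp
      rw [this]
      exact Matrix.posDef_diagonal_iff.2 fun _ => by positivity
    exact Matrix.PosDef.posSemidef_add h1 h2
  have hU : IsUnit Sg.det := hPD.det_pos.ne'.isUnit
  -- derivative of the inverse
  have hS0 : SigM Γ' σ (O + (0:ℝ) • V) = Sg := by simp [hSg]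
  have hI : HasDerivAt (fun τ : ℝ => (SigM Γ' σ (O + τ • V))⁻¹)
      (-(Sg⁻¹ * (V * Γ' * Oᵀ + O * Γ' * Vᵀ) * Sg⁻¹)) 0 := by
    have := hasDerivAt_matrix_inv hS (by simp only [hS0]; exact hU)
    simpa only [hS0] using this
  -- assemble
  have h := (hAT.matMul hI).matMul hA
  simp only [hS0] at h
  convert h using 1
  simp only [zero_smul, add_zero]
  simp only [Matrix.mul_add, Matrix.add_mul, Matrix.mul_neg, Matrix.neg_mul,
    Matrix.mul_assoc, sub_eq_add_neg, neg_add]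
  abel
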